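/- Let C, C' ⊆ ℝⁿ be the interiors of rational polyhedral cones such that W := closure(C) ∩ closure(C') is a common codimension-one face. Let γ be an automorphism of ℝⁿ preserving the lattice ℤⁿ, with γ(C) = C', fixing W pointwise. Then γ² = 1 and the fixed-point set of γ is exactly the hyperplane spanned by W. -/

import Mathlib

/-!
Write the hyperplane `H = span W` as `ker f`. Since `γ` fixes `H` pointwise, it is a
transvection `x ↦ x + f x • v`, so `f ∘ γ = det γ • f`. Integrality forces `det γ = ±1`.
Using a point `w` in the relative interior of `W` one shows that `f` does not vanish on `C`
and that `C` and `C'` lie on opposite sides of `H`; hence `det γ < 0`, i.e.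
`f ∘ γ = -f`. A map fixing `ker f` with `f ∘ γ = -f` is an involution with fixed locus
`ker f`, because `x + γ x ∈ ker f`.
-/

open Set Module LinearMap Pointwise

def IsRatPolyCone {n : ℕ} (σ : Set (Fin n → ℝ)) : Prop :=
  ∃ (m : ℕ) (v : Fin m → (Fin n → ℚ)),
    σ = {x | ∃ c : Fin m → ℝ, (∀ i, 0 ≤ c i) ∧
      x = ∑ i, c i • (fun j => ((v i j : ℝ)))}

def IsFaceOf {n : ℕ} (F C : Set (Fin n → ℝ)) : Prop :=
  F ⊆ C ∧ Convex ℝ F ∧ (∀ c : ℝ, 0 ≤ c → ∀ x ∈ F, c • x ∈ F) ∧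
    ∀ x ∈ C, ∀ y ∈ C, x + y ∈ F → x ∈ F ∧ y ∈ F

/-- An integral automorphism of `ℝⁿ`: a linear automorphism restricting to an
automorphism of the lattice `ℤⁿ`. -/
def IsIntegralAut {n : ℕ} (γ : (Fin n → ℝ) ≃ₗ[ℝ] (Fin n → ℝ)) : Prop :=
  (∀ x : Fin n → ℤ, ∃ y : Fin n → ℤ, γ (fun i => ((x i : ℝ))) = fun i => ((y i : ℝ))) ∧
  (∀ x : Fin n → ℤ, ∃ y : Fin n → ℤ, γ.symm (fun i => ((x i : ℝ))) = fun i => ((y i : ℝ)))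

section
variable {K V : Type*} [Field K] [AddCommGroup V] [Module K V]

theorem Submodule.exists_dual_ne_zero_ker_eq [FiniteDimensional K V] (p : Submodule K V)
    (hp : finrank K p + 1 = finrank K V) :
    ∃ f : Module.Dual K V, f ≠ 0 ∧ LinearMap.ker f = p := by
  have hlt : p < ⊤ := lt_top_iff_ne_top.2 fun h => by
    rw [h, finrank_top] at hp; omega
  obtain ⟨f, hf, hpf⟩ := p.exists_dual_map_eq_bot_of_lt_top hlt inferInstance
  refine ⟨f, hf, (Submodule.eq_of_le_of_finrank_eq (LinearMap.le_ker_iff_map.2 hpf) ?_).symm⟩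
  have := f.finrank_ker_add_one_of_ne_zero hf
  omega

theorem LinearMap.eq_transvection_of_fixes_ker {γ : V →ₗ[K] V} {f : Module.Dual K V}
    (hγ : ∀ x ∈ ker f, γ x = x) {x₀ : V} (hx₀ : f x₀ ≠ 0) :
    γ = transvection f ((f x₀)⁻¹ • (γ x₀ - x₀)) := by
  ext x
  have hx : γ (x - (f x / f x₀) • x₀) = x - (f x / f x₀) • x₀ :=
    hγ _ (by simp [div_mul_cancel₀ _ hx₀])
  rw [map_sub, map_smul] at hx
  rw [transvection.apply, smul_smul, ← div_eq_mul_inv]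
  linear_combination (norm := module) hx

theorem LinearMap.dual_apply_eq_det_mul_of_fixes_ker [FiniteDimensional K V] {γ : V →ₗ[K] V}
    {f : Module.Dual K V} (hγ : ∀ x ∈ ker f, γ x = x) (x : V) :
    f (γ x) = LinearMap.det γ * f x := by
  by_cases hf : f = 0
  · simp [hf]
  obtain ⟨x₀, hx₀⟩ : ∃ x₀, f x₀ ≠ 0 := by
    by_contra! h
    exact hf (LinearMap.ext h)
  rw [eq_transvection_of_fixes_ker hγ hx₀, transvection.det, transvection.apply, map_add,
    map_smul, smul_eq_mul]
  ring

theorem LinearMap.apply_apply_eq_self_of_fixes_ker {γ : V →ₗ[K] V} {f : Module.Dual K V}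
    (hγ : ∀ x ∈ ker f, γ x = x) (hf : ∀ x, f (γ x) = -f x) (x : V) : γ (γ x) = x := by
  have hx : γ (x + γ x) = x + γ x := hγ _ (by simp [hf])
  rw [map_add] at hx
  exact add_left_cancel (hx.trans (add_comm _ _))

theorem LinearMap.setOf_apply_eq_self_eq_ker [CharZero K] {γ : V →ₗ[K] V} {f : Module.Dual K V}
    (hγ : ∀ x ∈ ker f, γ x = x) (hf : ∀ x, f (γ x) = -f x) :
    {x | γ x = x} = (ker f : Set V) := by
  ext x
  refine ⟨fun hx => ?_, hγ x⟩
  have := hf x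
  rw [show γ x = x from hx] at this
  exact self_eq_neg.1 this

end

theorem LinearMap.exists_det_eq_intCast {n : ℕ} {g : (Fin n → ℝ) →ₗ[ℝ] (Fin n → ℝ)}
    (hg : ∀ x : Fin n → ℤ, ∃ y : Fin n → ℤ, g (fun i => (x i : ℝ)) = fun i => (y i : ℝ)) :
    ∃ z : ℤ, LinearMap.det g = z := by
  choose N hN using fun j => hg (Pi.single j 1)
  refine ⟨(Matrix.of fun i j => N j i).det, ?_⟩
  rw [← LinearMap.det_toMatrix', ← eq_intCast (Int.castRingHom ℝ), RingHom.map_det]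
  congr 1
  ext i j
  have hj : (fun k => ((Pi.single j 1 : Fin n → ℤ) k : ℝ)) = Pi.single j 1 := by
    ext k
    simp [Pi.single_apply]
  simpa [LinearMap.toMatrix'_apply, hj] using congrFun (hN j) i

namespace PointedCone

variable {E : Type*} [AddCommGroup E] [Module ℝ E]

theorem exists_forall_exists_add_smul_mem [FiniteDimensional ℝ E] (K : PointedCone ℝ E) :
    ∃ w ∈ K, ∀ x ∈ Submodule.span ℝ (K : Set E), ∃ ε : ℝ, 0 < ε ∧ w + ε • x ∈ K := by
  obtain ⟨s, hsK, hspan, hli⟩ := exists_linearIndependent ℝ (K : Set E)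
  lift s to Finset E using hli.setFinite
  refine ⟨∑ i ∈ s, i, K.sum_mem fun i hi => hsK hi, fun x hx => ?_⟩
  rw [← hspan] at hx
  obtain ⟨c, -, rfl⟩ := Submodule.mem_span_finset.1 hx
  set S := ∑ i ∈ s, |c i|
  have hS : 0 ≤ S := Finset.sum_nonneg fun i _ => abs_nonneg _
  refine ⟨(1 + S)⁻¹, by positivity, ?_⟩
  have hsum : ∑ i ∈ s, i + (1 + S)⁻¹ • ∑ i ∈ s, c i • i = ∑ i ∈ s, (1 + c i / (1 + S)) • i := by
    simp only [Finset.smul_sum, ← Finset.sum_add_distrib, add_smul, one_smul, smul_smul,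
      div_eq_inv_mul]
  rw [hsum]
  refine K.sum_mem fun i hi => K.smul_mem ?_ (hsK hi)
  have hci : -c i ≤ 1 + S :=
    (neg_le_abs (c i)).trans ((Finset.single_le_sum (fun j _ => abs_nonneg (c j)) hi).trans
      (le_add_of_nonneg_left zero_le_one))
  have := div_le_one_of_le₀ hci (by positivity)
  rw [neg_div] at this
  linarith

variable [TopologicalSpace E] {K : PointedCone ℝ E}

theorem smul_mem_interior [ContinuousConstSMul ℝ E] {t : ℝ} (ht : 0 < t) {x : E}
    (hx : x ∈ interior (K : Set E)) : t • x ∈ interior (K : Set E) := by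
  obtain ⟨U, hUK, hU, hxU⟩ := mem_interior.1 hx
  refine mem_interior.2 ⟨t • U, ?_, hU.smul₀ ht.ne', smul_mem_smul_set hxU⟩
  rintro _ ⟨y, hy, rfl⟩
  exact K.smul_mem ht.le (hUK hy)

theorem add_mem_interior_of_mem_closure [IsTopologicalAddGroup E] [ContinuousSMul ℝ E]
    {a b : E} (ha : a ∈ closure (K : Set E)) (hb : b ∈ interior (K : Set E)) :
    a + b ∈ interior (K : Set E) := by
  have hmid : (2 : ℝ)⁻¹ • b + (2 : ℝ)⁻¹ • a ∈ interior (K : Set E) :=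
    K.convex.combo_interior_closure_mem_interior hb ha (by norm_num) (by norm_num) (by norm_num)
  convert smul_mem_interior two_pos hmid using 1
  module

section TwoCones

variable [IsTopologicalAddGroup E] [ContinuousSMul ℝ E] {K' : PointedCone ℝ E}
  {f : Module.Dual ℝ E}

theorem disjoint_interior_of_closure_inter_subset_ker (hf : f ≠ 0)
    (h : closure (K : Set E) ∩ closure K' ⊆ ker f) :
    Disjoint (interior (K : Set E)) (interior (K' : Set E)) := by
  rw [Set.disjoint_iff_inter_eq_empty, ← Set.not_nonempty_iff_eq_empty]
  intro hne
  have hsub : interior (K : Set E) ∩ interior K' ⊆ ker f :=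
    (Set.inter_subset_inter (interior_subset.trans subset_closure)
      (interior_subset.trans subset_closure)).trans h
  have hint : (interior (ker f : Set E)).Nonempty :=
    hne.mono (interior_maximal hsub (isOpen_interior.inter isOpen_interior))
  exact hf (LinearMap.ker_eq_top.1 ((ker f).eq_top_of_nonempty_interior' hint))

variable [FiniteDimensional ℝ E]

theorem apply_mul_apply_nonpos_of_mem_interior (hf : f ≠ 0)
    (hker : ker f = Submodule.span ℝ (closure (K : Set E) ∩ closure K')) {x y : E}
    (hx : x ∈ interior (K : Set E)) (hy : y ∈ interior (K' : Set E)) : f x * f y ≤ 0 := by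
  -- If `f x`, `f y` had the same sign, the ray from `w` towards `y` would enter both interiors.
  by_contra! hpos
  have hfx : f x ≠ 0 := left_ne_zero_of_mul hpos.ne'
  have hs : 0 < f y / f x := by
    rw [← mul_div_mul_left (f y) (f x) hfx, ← sq]
    positivity
  obtain ⟨w, hw, hwW⟩ := (K.closure ⊓ K'.closure).exists_forall_exists_add_smul_mem
  obtain ⟨ε, hε, hmem⟩ := hwW (y - (f y / f x) • x) (by
    rw [Submodule.coe_inf, coe_closure, coe_closure, ← hker]
    simp [div_mul_cancel₀ _ hfx])
  have hK : w + ε • y ∈ interior (K : Set E) := by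
    convert add_mem_interior_of_mem_closure hmem.1 (smul_mem_interior (mul_pos hε hs) hx) using 1
    module
  have hK' : w + ε • y ∈ interior (K' : Set E) :=
    add_mem_interior_of_mem_closure hw.2 (smul_mem_interior hε hy)
  exact (disjoint_interior_of_closure_inter_subset_ker hf
    (hker ▸ Submodule.subset_span)).ne_of_mem hK hK' rfl

theorem apply_ne_zero_of_mem_interior (hf : f ≠ 0)
    (hker : ker f = Submodule.span ℝ (closure (K : Set E) ∩ closure K'))
    (hK' : (interior (K' : Set E)).Nonempty)
    (hface : ∀ a ∈ closure (K : Set E), ∀ b ∈ closure (K : Set E),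
      a + b ∈ closure (K : Set E) ∩ closure K' →
        a ∈ closure (K : Set E) ∩ closure K' ∧ b ∈ closure (K : Set E) ∩ closure K')
    {x : E} (hx : x ∈ interior (K : Set E)) : f x ≠ 0 := by
  intro hfx
  obtain ⟨w, hw, hwW⟩ := (K.closure ⊓ K'.closure).exists_forall_exists_add_smul_mem
  obtain ⟨ε, hε, hmem⟩ := hwW (-x) (by
    rw [Submodule.coe_inf, coe_closure, coe_closure, ← hker]
    simp [hfx])
  have hεx := smul_mem_interior hε hx
  -- `w = (w - ε • x) + ε • x` with both summands in `closure K`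
  have hεxW := (hface _ hmem.1 _ (subset_closure (interior_subset hεx))
    (by simpa using hw)).2
  have hεxK' : ε • x ∈ closure (interior (K' : Set E)) := by
    rw [K'.convex.closure_interior_eq_closure_of_nonempty_interior hK']
    exact hεxW.2
  obtain ⟨z, hzK, hzK'⟩ := mem_closure_iff.1 hεxK' _ isOpen_interior hεx
  exact (disjoint_interior_of_closure_inter_subset_ker hf
    (hker ▸ Submodule.subset_span)).ne_of_mem hzK hzK' rfl

end TwoCones

end PointedCone

theorem IsRatPolyCone.exists_pointedCone_coe_eq {n : ℕ} {σ : Set (Fin n → ℝ)}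
    (h : IsRatPolyCone σ) : ∃ K : PointedCone ℝ (Fin n → ℝ), (K : Set (Fin n → ℝ)) = σ := by
  obtain ⟨m, v, rfl⟩ := h
  refine ⟨PointedCone.hull ℝ (range fun i j => (v i j : ℝ)), Set.ext fun x => ?_⟩
  simp only [SetLike.mem_coe, Submodule.mem_span_range_iff_exists_fun, mem_ofPred_eq]
  constructor
  · rintro ⟨c, rfl⟩
    exact ⟨fun i => c i, fun i => (c i).2, rfl⟩
  · rintro ⟨c, hc, rfl⟩
    exact ⟨fun i => ⟨c i, hc i⟩, rfl⟩

theorem IsIntegralAut.det_eq_one_or_neg_one {n : ℕ} {γ : (Fin n → ℝ) ≃ₗ[ℝ] (Fin n → ℝ)}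
    (hγ : IsIntegralAut γ) :
    LinearMap.det (γ : (Fin n → ℝ) →ₗ[ℝ] (Fin n → ℝ)) = 1 ∨
      LinearMap.det (γ : (Fin n → ℝ) →ₗ[ℝ] (Fin n → ℝ)) = -1 := by
  obtain ⟨a, ha⟩ := LinearMap.exists_det_eq_intCast hγ.1
  obtain ⟨b, hb⟩ := LinearMap.exists_det_eq_intCast hγ.2
  have hab : a * b = 1 := by
    have := γ.det_mul_det_symm
    rw [ha, hb] at this
    exact_mod_cast this
  rcases Int.eq_one_or_neg_one_of_mul_eq_one hab with rfl | rfl <;> simp [ha]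

theorem stmt1_general {n : ℕ} (σ σ' : Set (Fin n → ℝ))
    (hσ : IsRatPolyCone σ) (hσ' : IsRatPolyCone σ')
    (C C' : Set (Fin n → ℝ)) (hC : C = interior σ) (hC' : C' = interior σ')
    (hCne : C.Nonempty)
    (W : Set (Fin n → ℝ)) (hW : W = closure C ∩ closure C')
    (hWfaceC : IsFaceOf W (closure C))
    (hWcodim : Module.finrank ℝ (Submodule.span ℝ W) + 1 = n)
    (γ : (Fin n → ℝ) ≃ₗ[ℝ] (Fin n → ℝ)) (hγint : IsIntegralAut γ)
    (hγC : γ '' C = C') (hγW : ∀ w ∈ W, γ w = w) :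
    (∀ x, γ (γ x) = x) ∧
    {x | γ x = x} = (Submodule.span ℝ W : Set (Fin n → ℝ)) := by
  obtain ⟨K, rfl⟩ := hσ.exists_pointedCone_coe_eq
  obtain ⟨K', rfl⟩ := hσ'.exists_pointedCone_coe_eq
  subst hC hC' hW
  have hC'ne : (interior (K' : Set (Fin n → ℝ))).Nonempty := hγC ▸ hCne.image γ
  rw [K.convex.closure_interior_eq_closure_of_nonempty_interior hCne,
    K'.convex.closure_interior_eq_closure_of_nonempty_interior hC'ne] at hWfaceC hγW hWcodim ⊢
  obtain ⟨f, hf, hker⟩ :=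
    Submodule.exists_dual_ne_zero_ker_eq _ (hWcodim.trans (Module.finrank_fin_fun ℝ).symm)
  have hγker : ∀ x ∈ ker f, γ x = x := fun x hx =>
    LinearMap.eqOn_span (g := LinearMap.id) hγW (hker ▸ hx)
  obtain ⟨x₀, hx₀⟩ := hCne
  have hfx₀ : f x₀ ≠ 0 :=
    PointedCone.apply_ne_zero_of_mem_interior hf hker hC'ne hWfaceC.2.2.2 hx₀
  have hsides : f x₀ * f (γ x₀) ≤ 0 :=
    PointedCone.apply_mul_apply_nonpos_of_mem_interior hf hker hx₀ (hγC ▸ mem_image_of_mem γ hx₀)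
  have hfγ : ∀ x, f (γ x) = LinearMap.det (γ : (Fin n → ℝ) →ₗ[ℝ] (Fin n → ℝ)) * f x :=
    LinearMap.dual_apply_eq_det_mul_of_fixes_ker hγker
  have hdet : LinearMap.det (γ : (Fin n → ℝ) →ₗ[ℝ] (Fin n → ℝ)) = -1 := by
    refine hγint.det_eq_one_or_neg_one.resolve_left fun h => hfx₀ ?_
    rw [hfγ, h, one_mul] at hsides
    exact mul_self_eq_zero.1 (le_antisymm hsides (mul_self_nonneg _))
  have hflip : ∀ x, f (γ x) = -f x := fun x => by rw [hfγ, hdet, neg_one_mul]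
  exact ⟨LinearMap.apply_apply_eq_self_of_fixes_ker hγker hflip,
    hker ▸ LinearMap.setOf_apply_eq_self_eq_ker hγker hflip⟩

theorem stmt1 {n : ℕ} (σ σ' : Set (Fin n → ℝ))
    (hσ : IsRatPolyCone σ) (hσ' : IsRatPolyCone σ')
    (C C' : Set (Fin n → ℝ)) (hC : C = interior σ) (hC' : C' = interior σ')
    (hCne : C.Nonempty) (hC'ne : C'.Nonempty)
    (W : Set (Fin n → ℝ)) (hW : W = closure C ∩ closure C')
    (hWfaceC : IsFaceOf W (closure C)) (hWfaceC' : IsFaceOf W (closure C'))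
    (hWcodim : Module.finrank ℝ (Submodule.span ℝ W) + 1 = n)
    (γ : (Fin n → ℝ) ≃ₗ[ℝ] (Fin n → ℝ)) (hγint : IsIntegralAut γ)
    (hγC : γ '' C = C') (hγW : ∀ w ∈ W, γ w = w) :
    (∀ x, γ (γ x) = x) ∧
    {x | γ x = x} = (Submodule.span ℝ W : Set (Fin n → ℝ)) :=
  stmt1_general σ σ' hσ hσ' C C' hC hC' hCne W hW hWfaceC hWcodim γ hγint hγC hγW
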